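/- arXiv:1509.00578 — 5 statements merged into one kernel-verified Lean document; each statement's English description precedes it below -/
import Mathlib

section
/- Let k be a commutative ring and let (A, ρ) be a quasitriangular Hopf algebra over k whose antipode s is bijective. Then the inverse of ρ in the algebra A ⊗ A is given by ρ⁻¹ = (1_A ⊗ s⁻¹)(ρ). -/
open TensorProduct

noncomputable section

variable (k A : Type*) [CommRing k] [Ring A] [HopfAlgebra k A]

/-- `ρ₁₂ = Σ e ⊗ e' ⊗ 1` in `A ⊗ (A ⊗ A)`. -/
def rho12 (ρ : A ⊗[k] A) : A ⊗[k] (A ⊗[k] A) :=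
  TensorProduct.map LinearMap.id ((TensorProduct.mk k A A).flip 1) ρ

/-- `ρ₁₃ = Σ e ⊗ 1 ⊗ e'` in `A ⊗ (A ⊗ A)`. -/
def rho13 (ρ : A ⊗[k] A) : A ⊗[k] (A ⊗[k] A) :=
  TensorProduct.map LinearMap.id (TensorProduct.mk k A A 1) ρ

/-- `ρ₂₃ = 1 ⊗ Σ e ⊗ e'` in `A ⊗ (A ⊗ A)`. -/
def rho23 (ρ : A ⊗[k] A) : A ⊗[k] (A ⊗[k] A) :=
  (1 : A) ⊗ₜ[k] ρ

/-- `(A, ρ)` is quasitriangular: `ρ` is invertible in the algebra `A ⊗ A`,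
`ρ ⬝ Δ(x) = Δ'(x) ⬝ ρ` for all `x`, `(1 ⊗ Δ)(ρ) = ρ₁₃ρ₁₂` and `(Δ ⊗ 1)(ρ) = ρ₁₃ρ₂₃`. -/
def IsQuasitriangular (ρ : A ⊗[k] A) : Prop :=
  IsUnit ρ ∧
  (∀ x : A, ρ * Coalgebra.comul (R := k) x =
      (TensorProduct.comm k A A) (Coalgebra.comul (R := k) x) * ρ) ∧
  TensorProduct.map LinearMap.id (Coalgebra.comul (R := k)) ρ =
      rho13 k A ρ * rho12 k A ρ ∧
  TensorProduct.assoc k A A A (TensorProduct.map (Coalgebra.comul (R := k)) LinearMap.id ρ) =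
      rho13 k A ρ * rho23 k A ρ

lemma map_id_mul {B : Type*} [Ring B] [Algebra k B] (g : A →ₗ[k] B)
    (hm : ∀ x y : A, g (x * y) = g x * g y) (u v : A ⊗[k] A) :
    TensorProduct.map LinearMap.id g (u * v) =
      TensorProduct.map LinearMap.id g u * TensorProduct.map LinearMap.id g v := by
  induction u using TensorProduct.induction_on with
  | zero => simp
  | tmul a b =>
    induction v using TensorProduct.induction_on with
    | zero => simp
    | tmul c d => simp [Algebra.TensorProduct.tmul_mul_tmul, hm]
    | add x y hx hy => simp [mul_add, hx, hy]
  | add x y hx hy => simp [add_mul, hx, hy]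

lemma map_id_one {B : Type*} [Ring B] [Algebra k B] (g : A →ₗ[k] B) (h1 : g 1 = 1) :
    TensorProduct.map LinearMap.id g (1 : A ⊗[k] A) = 1 := by
  simp [Algebra.TensorProduct.one_def, h1]

def psiL : A ⊗[k] A →ₗ[k] A :=
  (TensorProduct.lid k A).toLinearMap ∘ₗ LinearMap.rTensor A (Coalgebra.counit (R := k))
def eps1 : A →ₗ[k] A := (Algebra.linearMap k A) ∘ₗ (Coalgebra.counit (R := k))
def kay : A ⊗[k] A →ₗ[k] A :=
  (LinearMap.mul' k A) ∘ₗ LinearMap.lTensor A (HopfAlgebra.antipode (R := k))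

lemma lem1 (x y : A ⊗[k] A) :
    TensorProduct.map LinearMap.id (psiL k A) (rho13 k A x * rho12 k A y) =
      x * TensorProduct.map LinearMap.id (eps1 k A) y := by
  induction x using TensorProduct.induction_on with
  | zero => simp [rho13, rho12]
  | tmul a b =>
    induction y using TensorProduct.induction_on with
    | zero => simp [rho13, rho12]
    | tmul c d =>
      simp [rho13, rho12, psiL, eps1, Algebra.TensorProduct.tmul_mul_tmul,
        Algebra.algebraMap_eq_smul_one, mul_smul_comm, smul_tmul']
    | add u v hu hv => simp_all [rho12, mul_add]
  | add u v hu hv => simp_all [rho13, add_mul]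

lemma lem2 (x y : A ⊗[k] A) :
    TensorProduct.map LinearMap.id (kay k A) (rho12 k A x * rho13 k A y) =
      x * TensorProduct.map LinearMap.id (HopfAlgebra.antipode (R := k)) y := by
  induction x using TensorProduct.induction_on with
  | zero => simp [rho13, rho12]
  | tmul a b =>
    induction y using TensorProduct.induction_on with
    | zero => simp [rho13, rho12]
    | tmul c d =>
      simp [rho13, rho12, kay, Algebra.TensorProduct.tmul_mul_tmul]
    | add u v hu hv => simp_all [rho13, mul_add]
  | add u v hu hv => simp_all [rho12, add_mul]

lemma psiL_comul : (psiL k A) ∘ₗ (Coalgebra.comul (R := k)) = LinearMap.id := by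
  ext a; simp [psiL, Coalgebra.rTensor_counit_comul]

lemma kay_comul : (kay k A) ∘ₗ (Coalgebra.comul (R := k)) = eps1 k A := by
  ext a; simp [kay, eps1, HopfAlgebra.mul_antipode_lTensor_comul_apply]

lemma map_map_id {B C : Type*} [AddCommGroup B] [Module k B] [AddCommGroup C] [Module k C]
    (f : B →ₗ[k] C) (g : A →ₗ[k] B) (z : A ⊗[k] A) :
    TensorProduct.map LinearMap.id f (TensorProduct.map LinearMap.id g z) =
      TensorProduct.map LinearMap.id (f ∘ₗ g) z := by
  rw [← LinearMap.comp_apply, ← TensorProduct.map_comp, LinearMap.id_comp]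

/-- In a quasitriangular Hopf algebra whose antipode `s` is bijective (with linear
two-sided inverse `s'`), the inverse of `ρ` in `A ⊗ A` is `(1 ⊗ s⁻¹)(ρ)`. -/
theorem quasitriangular_rho_inv_antipode_inv_right (ρ ρinv : A ⊗[k] A)
    (h : IsQuasitriangular k A ρ)
    (hinv₁ : ρ * ρinv = 1) (hinv₂ : ρinv * ρ = 1)
    (s' : A →ₗ[k] A)
    (hs₁ : ∀ x : A, s' (HopfAlgebra.antipode (R := k) x) = x)
    (hs₂ : ∀ x : A, HopfAlgebra.antipode (R := k) (s' x) = x) :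
    ρinv = TensorProduct.map LinearMap.id s' ρ := by
  set s : A →ₗ[k] A := HopfAlgebra.antipode (R := k) with hs
  have h1 : TensorProduct.map LinearMap.id (Coalgebra.comul (R := k)) ρ =
      rho13 k A ρ * rho12 k A ρ := h.2.2.1
  -- multiplicativity facts
  have hΔmul := map_id_mul k A (Coalgebra.comul (R := k)) (fun x y => Bialgebra.comul_mul x y)
  have hΔone := map_id_one k A (Coalgebra.comul (R := k)) Bialgebra.comul_one
  have hemul := map_id_mul k A (eps1 k A) (by
    intro x y; simp [eps1, Bialgebra.counit_mul, map_mul])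
  have heone := map_id_one k A (eps1 k A) (by simp [eps1])
  have h12mul : ∀ u v : A ⊗[k] A, rho12 k A (u * v) = rho12 k A u * rho12 k A v := by
    intro u v
    exact map_id_mul k A ((TensorProduct.mk k A A).flip 1)
      (by intro x y; simp [Algebra.TensorProduct.tmul_mul_tmul]) u v
  have h13mul : ∀ u v : A ⊗[k] A, rho13 k A (u * v) = rho13 k A u * rho13 k A v := by
    intro u v
    exact map_id_mul k A (TensorProduct.mk k A A 1)
      (by intro x y; simp [Algebra.TensorProduct.tmul_mul_tmul]) u v
  have h12one : rho12 k A (1 : A ⊗[k] A) = 1 :=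
    map_id_one k A _ (by simp [Algebra.TensorProduct.one_def])
  have h13one : rho13 k A (1 : A ⊗[k] A) = 1 :=
    map_id_one k A _ (by simp [Algebra.TensorProduct.one_def])
  -- Step A: ρ = ρ * w
  set w := TensorProduct.map LinearMap.id (eps1 k A) ρ with hw
  have hA : ρ = ρ * w := by
    have e1 : TensorProduct.map LinearMap.id (psiL k A)
        (TensorProduct.map LinearMap.id (Coalgebra.comul (R := k)) ρ) = ρ := by
      rw [map_map_id, psiL_comul, TensorProduct.map_id]; rfl
    rw [h1, lem1] at e1
    exact e1.symm
  -- Step B: w = 1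
  have hB : w = 1 := by
    have : ρinv * ρ = ρinv * (ρ * w) := by rw [← hA]
    rw [hinv₂, ← mul_assoc, hinv₂, one_mul] at this
    exact this.symm
  -- Step C: map id Δ ρinv = rho12 ρinv * rho13 ρinv
  have hC : TensorProduct.map LinearMap.id (Coalgebra.comul (R := k)) ρinv =
      rho12 k A ρinv * rho13 k A ρinv := by
    have hPr : (rho13 k A ρ * rho12 k A ρ) * (rho12 k A ρinv * rho13 k A ρinv) = 1 := by
      rw [mul_assoc, ← mul_assoc (rho12 k A ρ), ← h12mul, hinv₁, h12one, one_mul,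
        ← h13mul, hinv₁, h13one]
    have hL : TensorProduct.map LinearMap.id (Coalgebra.comul (R := k)) ρinv *
        TensorProduct.map LinearMap.id (Coalgebra.comul (R := k)) ρ = 1 := by
      rw [← hΔmul, hinv₂, hΔone]
    calc TensorProduct.map LinearMap.id (Coalgebra.comul (R := k)) ρinv
        = TensorProduct.map LinearMap.id (Coalgebra.comul (R := k)) ρinv *
            ((rho13 k A ρ * rho12 k A ρ) * (rho12 k A ρinv * rho13 k A ρinv)) := by
          rw [hPr, mul_one]
      _ = (TensorProduct.map LinearMap.id (Coalgebra.comul (R := k)) ρinv *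
            TensorProduct.map LinearMap.id (Coalgebra.comul (R := k)) ρ) *
            (rho12 k A ρinv * rho13 k A ρinv) := by rw [← h1, mul_assoc]
      _ = rho12 k A ρinv * rho13 k A ρinv := by rw [hL, one_mul]
  -- Step D: ρinv * (map id s ρinv) = 1
  have hD : ρinv * TensorProduct.map LinearMap.id s ρinv = 1 := by
    have e2 : TensorProduct.map LinearMap.id (kay k A)
        (TensorProduct.map LinearMap.id (Coalgebra.comul (R := k)) ρinv) =
        TensorProduct.map LinearMap.id (eps1 k A) ρinv := by
      rw [map_map_id, kay_comul]
    rw [hC, lem2] at e2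
    have hwσ : TensorProduct.map LinearMap.id (eps1 k A) ρinv = 1 := by
      have : TensorProduct.map LinearMap.id (eps1 k A) ρinv * w = 1 := by
        rw [hw, ← hemul, hinv₂, heone]
      rwa [hB, mul_one] at this
    rw [hwσ] at e2
    exact e2
  -- Step E: map id s ρinv = ρ
  have hE : TensorProduct.map LinearMap.id s ρinv = ρ := by
    calc TensorProduct.map LinearMap.id s ρinv
        = (ρ * ρinv) * TensorProduct.map LinearMap.id s ρinv := by rw [hinv₁, one_mul]
      _ = ρ * (ρinv * TensorProduct.map LinearMap.id s ρinv) := by rw [mul_assoc]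
      _ = ρ := by rw [hD, mul_one]
  -- conclude
  rw [← hE, map_map_id]
  have : s' ∘ₗ s = LinearMap.id := LinearMap.ext hs₁
  rw [this, TensorProduct.map_id]
  rfl

end
end

section
/- (Drinfeld) Let k be a commutative ring and let (A, ρ) be a quasitriangular Hopf algebra over k with antipode s. Write ρ = Σ e ⊗ e′ and set u = Σ s(e′)·e ∈ A (that is, u is the image of ρ under the map A ⊗ A → A sending x ⊗ y to s(y)·x). Then u is invertible in A and s²(x) = u x u⁻¹ for all x ∈ A. -/
open TensorProduct

noncomputable section

section

variable (k A : Type*) [CommRing k] [Ring A] [HopfAlgebra k A]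

/-- The Drinfeld element `u = Σ s(e') e`, the image of `ρ = Σ e ⊗ e'` under the map
`A ⊗ A → A`, `x ⊗ y ↦ s(y) x`. -/
def uElt (ρ : A ⊗[k] A) : A :=
  LinearMap.mul' k A
    (TensorProduct.map (HopfAlgebra.antipode (R := k)) LinearMap.id
      ((TensorProduct.comm k A A) ρ))

end

/-!
Write `ρ = Σ e ⊗ e'`. Contracting the axioms `(1 ⊗ Δ)ρ = ρ₁₃ρ₁₂` and `(Δ ⊗ 1)ρ = ρ₁₃ρ₂₃` with the
counit gives `(1 ⊗ ε)ρ = (ε ⊗ 1)ρ = 1`; contracting them with the antipode gives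
`ρ⁻¹ = (s ⊗ 1)ρ` and `(1 ⊗ s)ρ⁻¹ = ρ`, hence `(s ⊗ s)ρ = ρ`.

The map `a ⊗ b ↦ s(b) U a` (`sandwich U`) satisfies `sandwich U (y z) = sandwich (sandwich U y) z`
and `sandwich 1 ρ = u`. Applied to `ρ Δ(x) = Δ'(x) ρ` it gives `Σ s(x₂) u x₁ = ε(x) u`, and
coassociativity turns this into `u x = s²(x) u`. Applied to `ρ (s ⊗ 1)ρ = 1` it shows that
`v = Σ e' s²(e)` satisfies `v u = 1`; since `(s ⊗ s)ρ = ρ`, also `s²(v) = v`, so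
`u v = s²(v) u = v u = 1`.
-/

open Coalgebra HopfAlgebra

section Counit

variable {k A : Type*} [CommSemiring k] [AddCommMonoid A] [Module k A] [Coalgebra k A]

variable (A) in
def counitLeft (M : Type*) [AddCommMonoid M] [Module k M] : A ⊗[k] M →ₗ[k] M :=
  TensorProduct.lid k M ∘ₗ (counit (R := k)).rTensor M

variable (A) in
def counitRight (M : Type*) [AddCommMonoid M] [Module k M] : M ⊗[k] A →ₗ[k] M :=
  TensorProduct.rid k M ∘ₗ (counit (R := k)).lTensor M

@[simp] lemma counitLeft_tmul {M : Type*} [AddCommMonoid M] [Module k M] (a : A) (m : M) :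
    counitLeft A M (a ⊗ₜ[k] m) = counit (R := k) a • m := by simp [counitLeft]

@[simp] lemma counitRight_tmul {M : Type*} [AddCommMonoid M] [Module k M] (a : A) (m : M) :
    counitRight A M (m ⊗ₜ[k] a) = counit (R := k) a • m := by simp [counitRight]

@[simp] lemma counitLeft_comul (a : A) : counitLeft A A (comul (R := k) a) = a := by
  simp [counitLeft]

@[simp] lemma counitRight_comul (a : A) : counitRight A A (comul (R := k) a) = a := by
  simp [counitRight]

lemma lTensor_counitLeft_map_comul (y : A ⊗[k] A) :
    (counitLeft A A).lTensor A (TensorProduct.map LinearMap.id (comul (R := k)) y) = y := by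
  induction y using TensorProduct.induction_on with
  | zero => simp
  | add y y' hy hy' => simp_all
  | tmul a b => simp

lemma counitLeft_assoc_map_comul (y : A ⊗[k] A) :
    counitLeft A (A ⊗[k] A)
      (TensorProduct.assoc k A A A (TensorProduct.map (comul (R := k)) LinearMap.id y)) = y := by
  induction y using TensorProduct.induction_on with
  | zero => simp
  | add y y' hy hy' => simp_all
  | tmul a b =>
    suffices ∀ w : A ⊗[k] A, counitLeft A (A ⊗[k] A) (TensorProduct.assoc k A A A (w ⊗ₜ b)) =
        counitLeft A A w ⊗ₜ b by simp [this]
    intro w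
    induction w using TensorProduct.induction_on with
    | zero => simp
    | add w w' hw hw' => simp_all [TensorProduct.add_tmul]
    | tmul c d => simp [TensorProduct.smul_tmul']

end Counit

section Antipode

variable {k A : Type*} [CommSemiring k] [Semiring A] [HopfAlgebra k A]

def swapMul (f g : A →ₗ[k] A) : A ⊗[k] A →ₗ[k] A :=
  LinearMap.mul' k A ∘ₗ TensorProduct.map f g ∘ₗ (TensorProduct.comm k A A).toLinearMap

@[simp] lemma swapMul_tmul (f g : A →ₗ[k] A) (a b : A) : swapMul f g (a ⊗ₜ b) = f b * g a := rfl

def sandwich (U : A) : A ⊗[k] A →ₗ[k] A := swapMul (antipode k) (LinearMap.mulLeft k U)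

@[simp] lemma sandwich_tmul (U a b : A) : sandwich U (a ⊗ₜ[k] b) = antipode k b * (U * a) := rfl

lemma sandwich_mul (U : A) (y z : A ⊗[k] A) : sandwich U (y * z) = sandwich (sandwich U y) z := by
  induction z using TensorProduct.induction_on with
  | zero => simp
  | tmul c d =>
    induction y using TensorProduct.induction_on with
    | zero => simp
    | tmul a b => simp [antipode_mul_antidistrib, mul_assoc]
    | add y y' hy hy' => simp_all [add_mul, mul_add]
  | add z z' hz hz' => simp [mul_add, hz, hz']

lemma sandwich_algebraMap (c : k) (y : A ⊗[k] A) :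
    sandwich (algebraMap k A c) y = c • sandwich 1 y := by
  induction y using TensorProduct.induction_on with
  | zero => simp
  | tmul a b => simp [Algebra.smul_def, Algebra.commutes, mul_assoc]
  | add y y' hy hy' => simp [hy, hy']

lemma swapMul_map_antipode (f g : A →ₗ[k] A) (y : A ⊗[k] A) :
    swapMul f g (TensorProduct.map (antipode k) (antipode k) y) =
      swapMul (f ∘ₗ antipode k) (g ∘ₗ antipode k) y := by
  induction y using TensorProduct.induction_on with
  | zero => simp
  | add y y' hy hy' => simp_all
  | tmul a b => simp

lemma antipode_antipode_swapMul (f g : A →ₗ[k] A) (y : A ⊗[k] A) :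
    antipode k (antipode k (swapMul f g y)) =
      swapMul (antipode k ∘ₗ antipode k ∘ₗ f) (antipode k ∘ₗ antipode k ∘ₗ g) y := by
  induction y using TensorProduct.induction_on with
  | zero => simp
  | add y y' hy hy' => simp_all
  | tmul a b => simp [antipode_mul_antidistrib]

lemma sandwich_one_comm (w : A ⊗[k] A) :
    sandwich (1 : A) (TensorProduct.comm k A A w) =
      LinearMap.mul' k A (TensorProduct.map (antipode k) LinearMap.id w) := by
  induction w using TensorProduct.induction_on with
  | zero => simp
  | add w w' hw hw' => simp_all
  | tmul a b => simp

lemma swapMul_antipode_comp_antipode_comul (c : A) :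
    swapMul (antipode k ∘ₗ antipode k) (antipode k) (comul (R := k) c) =
      algebraMap k A (counit (R := k) c) := by
  have (w : A ⊗[k] A) : swapMul (antipode k ∘ₗ antipode k) (antipode k) w =
      antipode k (LinearMap.mul' k A ((antipode k).lTensor A w)) := by
    induction w using TensorProduct.induction_on with
    | zero => simp
    | add w w' hw hw' => simp_all
    | tmul a b => simp [antipode_mul_antidistrib]
  simp [this, Algebra.algebraMap_eq_smul_one]

lemma rTensor_mul_map_antipode_map_comul (y : A ⊗[k] A) :
    (LinearMap.mul' k A ∘ₗ TensorProduct.map (antipode k) LinearMap.id).rTensor A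
      (TensorProduct.map (comul (R := k)) LinearMap.id y) = 1 ⊗ₜ counitLeft A A y := by
  induction y using TensorProduct.induction_on with
  | zero => simp
  | add y y' hy hy' => simp_all [TensorProduct.tmul_add]
  | tmul a b =>
    simp [← LinearMap.rTensor_def, Algebra.algebraMap_eq_smul_one, TensorProduct.smul_tmul]

lemma lTensor_mul_map_antipode_map_comul (y : A ⊗[k] A) :
    (LinearMap.mul' k A ∘ₗ TensorProduct.map LinearMap.id (antipode k)).lTensor A
      (TensorProduct.map LinearMap.id (comul (R := k)) y) = counitRight A A y ⊗ₜ 1 := by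
  induction y using TensorProduct.induction_on with
  | zero => simp
  | add y y' hy hy' => simp_all [TensorProduct.add_tmul]
  | tmul a b =>
    simp [← LinearMap.lTensor_def, Algebra.algebraMap_eq_smul_one, TensorProduct.smul_tmul]

lemma counitRight_map_antipode (y : A ⊗[k] A) :
    counitRight A A (TensorProduct.map (antipode k) LinearMap.id y) =
      antipode k (counitRight A A y) := by
  induction y using TensorProduct.induction_on with
  | zero => simp
  | add y y' hy hy' => simp_all
  | tmul a b => simp

end Antipode

section RMatrix

variable {k A : Type*} [CommRing k] [Ring A] [HopfAlgebra k A]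

lemma rho12_mul (x y : A ⊗[k] A) : rho12 k A (x * y) = rho12 k A x * rho12 k A y :=
  map_mul (Algebra.TensorProduct.map (AlgHom.id k A) Algebra.TensorProduct.includeLeft) x y

lemma rho13_mul (x y : A ⊗[k] A) : rho13 k A (x * y) = rho13 k A x * rho13 k A y :=
  map_mul (Algebra.TensorProduct.map (AlgHom.id k A) Algebra.TensorProduct.includeRight) x y

@[simp] lemma rho12_one : rho12 k A (1 : A ⊗[k] A) = 1 :=
  map_one (Algebra.TensorProduct.map (AlgHom.id k A)
    (Algebra.TensorProduct.includeLeft : A →ₐ[k] A ⊗[k] A))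

@[simp] lemma rho13_one : rho13 k A (1 : A ⊗[k] A) = 1 :=
  map_one (Algebra.TensorProduct.map (AlgHom.id k A)
    (Algebra.TensorProduct.includeRight : A →ₐ[k] A ⊗[k] A))

lemma lTensor_counitLeft_rho13_mul_rho12 (x y : A ⊗[k] A) :
    (counitLeft A A).lTensor A (rho13 k A x * rho12 k A y) = x * (counitRight A A y ⊗ₜ 1) := by
  induction x using TensorProduct.induction_on with
  | zero => simp [rho13]
  | add x x' hx hx' => simp_all [rho13, add_mul]
  | tmul a b =>
    induction y using TensorProduct.induction_on with
    | zero => simp [rho12]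
    | add y y' hy hy' => simp_all [rho12, mul_add, TensorProduct.add_tmul]
    | tmul c d => simp [rho12, rho13, TensorProduct.smul_tmul']

lemma counitLeft_rho13_mul_rho23 (x y : A ⊗[k] A) :
    counitLeft A (A ⊗[k] A) (rho13 k A x * rho23 k A y) = (1 ⊗ₜ counitLeft A A x) * y := by
  induction x using TensorProduct.induction_on with
  | zero => simp [rho13]
  | add x x' hx hx' => simp_all [rho13, add_mul, TensorProduct.tmul_add]
  | tmul a b =>
    induction y using TensorProduct.induction_on with
    | zero => simp [rho23]
    | add y y' hy hy' => simp_all [rho23, mul_add, TensorProduct.tmul_add]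
    | tmul c d => simp [rho13, rho23]

lemma rTensor_mul_map_antipode_rho13_mul_rho23 (x y : A ⊗[k] A) :
    (LinearMap.mul' k A ∘ₗ TensorProduct.map (antipode k) LinearMap.id).rTensor A
      ((TensorProduct.assoc k A A A).symm (rho13 k A x * rho23 k A y)) =
      TensorProduct.map (antipode k) LinearMap.id x * y := by
  induction x using TensorProduct.induction_on with
  | zero => simp [rho13]
  | add x x' hx hx' => simp_all [rho13, add_mul]
  | tmul a b =>
    induction y using TensorProduct.induction_on with
    | zero => simp [rho23]
    | add y y' hy hy' => simp_all [rho23, mul_add, TensorProduct.tmul_add]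
    | tmul c d => simp [rho13, rho23]

lemma lTensor_mul_map_antipode_rho12_mul_rho13 (x y : A ⊗[k] A) :
    (LinearMap.mul' k A ∘ₗ TensorProduct.map LinearMap.id (antipode k)).lTensor A
      (rho12 k A x * rho13 k A y) = x * TensorProduct.map LinearMap.id (antipode k) y := by
  induction x using TensorProduct.induction_on with
  | zero => simp [rho12]
  | add x x' hx hx' => simp_all [rho12, add_mul]
  | tmul a b =>
    induction y using TensorProduct.induction_on with
    | zero => simp [rho13]
    | add y y' hy hy' => simp_all [rho13, mul_add]
    | tmul c d => simp [rho12, rho13]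

variable {ρ : A ⊗[k] A}

theorem IsQuasitriangular.counitRight_eq_one (h : IsQuasitriangular k A ρ) :
    counitRight A A ρ = 1 := by
  obtain ⟨hunit, -, hΔ₂, -⟩ := h
  have key : ρ * (counitRight A A ρ ⊗ₜ 1) = ρ * 1 := by
    rw [mul_one, ← lTensor_counitLeft_rho13_mul_rho12, ← hΔ₂]
    exact lTensor_counitLeft_map_comul ρ
  simpa [Algebra.TensorProduct.one_def] using congrArg (counitRight A A) (hunit.mul_left_cancel key)

theorem IsQuasitriangular.counitLeft_eq_one (h : IsQuasitriangular k A ρ) :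
    counitLeft A A ρ = 1 := by
  obtain ⟨hunit, -, -, hΔ₁⟩ := h
  have key : ((1 : A) ⊗ₜ counitLeft A A ρ) * ρ = 1 * ρ := by
    rw [one_mul, ← counitLeft_rho13_mul_rho23, ← hΔ₁]
    exact counitLeft_assoc_map_comul ρ
  simpa [Algebra.TensorProduct.one_def] using congrArg (counitLeft A A) (hunit.mul_right_cancel key)

theorem IsQuasitriangular.map_antipode_mul_self (h : IsQuasitriangular k A ρ) :
    TensorProduct.map (antipode k) LinearMap.id ρ * ρ = 1 := by
  rw [← rTensor_mul_map_antipode_rho13_mul_rho23, ← h.2.2.2, LinearEquiv.symm_apply_apply,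
    rTensor_mul_map_antipode_map_comul, h.counitLeft_eq_one, Algebra.TensorProduct.one_def]

theorem IsQuasitriangular.mul_map_antipode (h : IsQuasitriangular k A ρ) :
    ρ * TensorProduct.map (antipode k) LinearMap.id ρ = 1 := by
  obtain ⟨u, rfl⟩ := h.1
  rw [(Units.mul_eq_one_iff_eq_inv).1 h.map_antipode_mul_self, Units.mul_inv]

theorem IsQuasitriangular.map_antipode_antipode (h : IsQuasitriangular k A ρ) :
    TensorProduct.map (antipode k) (antipode k) ρ = ρ := by
  set σ := TensorProduct.map (antipode k) LinearMap.id ρ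
  set Δ₂ := Algebra.TensorProduct.map (AlgHom.id k A) (Bialgebra.comulAlgHom k A)
  have hΔ : ∀ y, TensorProduct.map LinearMap.id (comul (R := k)) y = Δ₂ y := fun _ => rfl
  have hΔρ : Δ₂ ρ = rho13 k A ρ * rho12 k A ρ := h.2.2.1
  have h12 : rho12 k A ρ * rho12 k A σ = 1 := by
    rw [← rho12_mul, h.mul_map_antipode, rho12_one]
  have h13 : rho13 k A ρ * rho13 k A σ = 1 := by
    rw [← rho13_mul, h.mul_map_antipode, rho13_one]
  have hΔσ : Δ₂ σ = rho12 k A σ * rho13 k A σ := by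
    calc Δ₂ σ = Δ₂ σ * (rho13 k A ρ * (rho12 k A ρ * rho12 k A σ) * rho13 k A σ) := by
          rw [h12, mul_one, h13, mul_one]
      _ = Δ₂ (σ * ρ) * (rho12 k A σ * rho13 k A σ) := by
          rw [map_mul, hΔρ]; noncomm_ring
      _ = rho12 k A σ * rho13 k A σ := by
          rw [h.map_antipode_mul_self, map_one, one_mul]
  have hσ : σ * TensorProduct.map (antipode k) (antipode k) ρ = 1 := by
    have := congrArg
      ((LinearMap.mul' k A ∘ₗ TensorProduct.map LinearMap.id (antipode k)).lTensor A) hΔσ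
    rw [lTensor_mul_map_antipode_rho12_mul_rho13, ← hΔ,
      lTensor_mul_map_antipode_map_comul, counitRight_map_antipode, h.counitRight_eq_one,
      antipode_one, ← LinearMap.comp_apply, ← TensorProduct.map_comp, LinearMap.id_comp,
      LinearMap.comp_id, ← Algebra.TensorProduct.one_def] at this
    exact this.symm
  calc _ = (ρ * σ) * TensorProduct.map (antipode k) (antipode k) ρ := by
        rw [h.mul_map_antipode, one_mul]
    _ = ρ := by rw [mul_assoc, hσ, mul_one]

end RMatrix

section DrinfeldElement

variable {k A : Type*} [CommRing k] [Ring A] [HopfAlgebra k A] {ρ : A ⊗[k] A}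

variable (k A) in
def uInvElt (ρ : A ⊗[k] A) : A := swapMul LinearMap.id (antipode k ∘ₗ antipode k) ρ

lemma uElt_eq_sandwich_one : uElt k A ρ = sandwich 1 ρ := by
  rw [sandwich, LinearMap.mulLeft_one]; rfl

theorem IsQuasitriangular.sandwich_uElt_comul (h : IsQuasitriangular k A ρ) (x : A) :
    sandwich (uElt k A ρ) (comul (R := k) x) = counit (R := k) x • uElt k A ρ := by
  rw [uElt_eq_sandwich_one, ← sandwich_mul, h.2.1, sandwich_mul, sandwich_one_comm,
    ← LinearMap.rTensor_def, mul_antipode_rTensor_comul_apply, sandwich_algebraMap]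

theorem IsQuasitriangular.uElt_mul (h : IsQuasitriangular k A ρ) (x : A) :
    uElt k A ρ * x = antipode k (antipode k x) * uElt k A ρ := by
  set u := uElt k A ρ with hu
  let Ψ : A ⊗[k] (A ⊗[k] A) →ₗ[k] A := LinearMap.mul' k A ∘ₗ
    TensorProduct.map (antipode k ∘ₗ antipode k) (sandwich u) ∘ₗ
    (TensorProduct.comm k (A ⊗[k] A) A).toLinearMap ∘ₗ
    (TensorProduct.assoc k A A A).symm.toLinearMap
  have hΨ : ∀ a b c, Ψ (a ⊗ₜ (b ⊗ₜ c)) = antipode k (antipode k c) * (antipode k b * (u * a)) :=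
    fun _ _ _ => rfl
  have hΨ_lTensor : Ψ ∘ₗ (comul (R := k)).lTensor A = LinearMap.mulLeft k u ∘ₗ counitRight A A := by
    refine TensorProduct.ext' fun a c => ?_
    have : ∀ w, Ψ (a ⊗ₜ w) = swapMul (antipode k ∘ₗ antipode k) (antipode k) w * (u * a) := by
      intro w
      induction w using TensorProduct.induction_on with
      | zero => simp
      | add w w' hw hw' => simp_all [TensorProduct.tmul_add, add_mul]
      | tmul b c => simp [hΨ, mul_assoc]
    simp [this, swapMul_antipode_comp_antipode_comul, Algebra.algebraMap_eq_smul_one]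
  have hΨ_rTensor : Ψ ∘ₗ (TensorProduct.assoc k A A A).toLinearMap ∘ₗ (comul (R := k)).rTensor A =
      (LinearMap.mulRight k u ∘ₗ antipode k ∘ₗ antipode k) ∘ₗ counitLeft A A := by
    refine TensorProduct.ext' fun a c => ?_
    have : ∀ w, Ψ (TensorProduct.assoc k A A A (w ⊗ₜ c)) =
        antipode k (antipode k c) * sandwich u w := by
      intro w
      induction w using TensorProduct.induction_on with
      | zero => simp
      | add w w' hw hw' => simp_all [TensorProduct.add_tmul, mul_add]
      | tmul b d => simp [hΨ]
    simp [this, hu, h.sandwich_uElt_comul]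
  calc u * x = (LinearMap.mulLeft k u ∘ₗ counitRight A A) (comul (R := k) x) := by simp
    _ = Ψ (TensorProduct.assoc k A A A ((comul (R := k)).rTensor A (comul (R := k) x))) := by
        rw [← hΨ_lTensor, coassoc_apply]; rfl
    _ = antipode k (antipode k x) * u := by
        simpa using LinearMap.congr_fun hΨ_rTensor (comul x)

theorem IsQuasitriangular.swapMul_comp_antipode (h : IsQuasitriangular k A ρ)
    (f g : A →ₗ[k] A) : swapMul (f ∘ₗ antipode k) (g ∘ₗ antipode k) ρ = swapMul f g ρ := by
  rw [← swapMul_map_antipode, h.map_antipode_antipode]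

theorem IsQuasitriangular.uInvElt_mul_uElt (h : IsQuasitriangular k A ρ) :
    uInvElt k A ρ * uElt k A ρ = 1 := by
  have hσ : ∀ y, sandwich (uElt k A ρ) (TensorProduct.map (antipode k) LinearMap.id y) =
      swapMul (antipode k) (antipode k ∘ₗ antipode k ∘ₗ antipode k) y * uElt k A ρ := by
    intro y
    induction y using TensorProduct.induction_on with
    | zero => simp
    | add y y' hy hy' => simp_all [add_mul]
    | tmul a b => simp [h.uElt_mul, mul_assoc]
  have hv : swapMul (antipode k) (antipode k ∘ₗ antipode k ∘ₗ antipode k) ρ = uInvElt k A ρ := by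
    rw [uInvElt]
    simpa only [LinearMap.id_comp, LinearMap.comp_assoc] using
      h.swapMul_comp_antipode LinearMap.id (antipode k ∘ₗ antipode k)
  calc uInvElt k A ρ * uElt k A ρ
      = sandwich 1 (ρ * TensorProduct.map (antipode k) LinearMap.id ρ) := by
        rw [sandwich_mul, ← uElt_eq_sandwich_one, hσ, hv]
    _ = 1 := by simp [h.mul_map_antipode, Algebra.TensorProduct.one_def]

theorem IsQuasitriangular.antipode_antipode_uInvElt (h : IsQuasitriangular k A ρ) :
    antipode k (antipode k (uInvElt k A ρ)) = uInvElt k A ρ := by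
  rw [uInvElt, antipode_antipode_swapMul]
  simpa only [LinearMap.id_comp, LinearMap.comp_id, LinearMap.comp_assoc] using
    (h.swapMul_comp_antipode (LinearMap.id ∘ₗ antipode k)
      (antipode k ∘ₗ antipode k ∘ₗ antipode k)).trans
    (h.swapMul_comp_antipode LinearMap.id (antipode k ∘ₗ antipode k))

theorem IsQuasitriangular.uElt_mul_uInvElt (h : IsQuasitriangular k A ρ) :
    uElt k A ρ * uInvElt k A ρ = 1 := by
  rw [h.uElt_mul, h.antipode_antipode_uInvElt, h.uInvElt_mul_uElt]

end DrinfeldElement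

variable (k A : Type*) [CommRing k] [Ring A] [HopfAlgebra k A]

/-- (Drinfeld) In a quasitriangular Hopf algebra, the element `u = Σ s(e') e` is
invertible and `s²(x) = u x u⁻¹` for all `x ∈ A`. -/
theorem drinfeld_u_invertible_antipode_sq (ρ : A ⊗[k] A) (h : IsQuasitriangular k A ρ) :
    ∃ uinv : A, uElt k A ρ * uinv = 1 ∧ uinv * uElt k A ρ = 1 ∧
      ∀ x : A, HopfAlgebra.antipode (R := k) (HopfAlgebra.antipode (R := k) x) =
        uElt k A ρ * x * uinv := by
  refine ⟨uInvElt k A ρ, h.uElt_mul_uInvElt, h.uInvElt_mul_uElt, fun x => ?_⟩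
  rw [h.uElt_mul, mul_assoc, h.uElt_mul_uInvElt, mul_one]
end
end

section
/- Fix a natural number n ≥ 1 and let R be the Homflypt R-matrix on the index set I_n over the Laurent polynomial ring ℤ[q, q⁻¹]. Then R satisfies the Yang–Baxter equation in the form: for all a, b, c, d, e, f ∈ I_n, Σ_{i,j,k ∈ I_n} R^{ab}_{ij} R^{jc}_{kf} R^{ik}_{de} = Σ_{i,j,k ∈ I_n} R^{bc}_{ij} R^{ai}_{dk} R^{kj}_{ef}. -/
noncomputable section

open LaurentPolynomial

/-- The index set `I_n = {-n, -n+2, …, n-2, n} ⊆ ℤ`. -/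
def homflyIdx (n : ℕ) : Finset ℤ :=
  (Finset.Icc (-(n : ℤ)) (n : ℤ)).filter fun a => (a + (n : ℤ)) % 2 = 0

/-- The Homflypt R-matrix over `ℤ[q, q⁻¹]` (with `q = T 1` in the Laurent polynomial
ring `ℤ[T;T⁻¹]`): `R^{ab}_{cd} = q` if `a = b = c = d`; `R^{ab}_{cd} = q - q⁻¹` if
`a = c`, `b = d` and `a < b`; `R^{ab}_{cd} = 1` if `a = d`, `b = c` and `a ≠ b`;
and `0` otherwise. -/
def homflyR (a b c d : ℤ) : LaurentPolynomial ℤ :=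
  if a = b ∧ b = c ∧ c = d then T 1
  else if a = c ∧ b = d ∧ a < b then T 1 - T (-1)
  else if a = d ∧ b = c ∧ a ≠ b then 1
  else 0

/-- The inverse Homflypt R-matrix over `ℤ[q, q⁻¹]`: `R̄^{ab}_{cd} = q⁻¹` if
`a = b = c = d`; `R̄^{ab}_{cd} = q⁻¹ - q` if `a = c`, `b = d` and `a > b`;
`R̄^{ab}_{cd} = 1` if `a = d`, `b = c` and `a ≠ b`; and `0` otherwise. -/
def homflyRbar (a b c d : ℤ) : LaurentPolynomial ℤ :=
  if a = b ∧ b = c ∧ c = d then T (-1)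
  else if a = c ∧ b = d ∧ a > b then T (-1) - T 1
  else if a = d ∧ b = c ∧ a ≠ b then 1
  else 0

lemma hsum {M : Type*} [AddCommMonoid M] {s : Finset ℤ} {x y : ℤ}
    (hx : x ∈ s) (hy : y ∈ s) (g : ℤ → M)
    (h0 : ∀ k ∈ s, k ≠ x → k ≠ y → g k = 0) :
    ∑ k ∈ s, g k = g x + (if x = y then 0 else g y) := by
  by_cases hxy : x = y
  · subst hxy
    rw [if_pos rfl, add_zero]
    exact Finset.sum_eq_single_of_mem x hx (fun k hk hkx => h0 k hk hkx hkx)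
  · rw [if_neg hxy]
    have hsub : ({x, y} : Finset ℤ) ⊆ s := by
      intro t ht
      rcases Finset.mem_insert.mp ht with h | h
      · subst h; exact hx
      · rw [Finset.mem_singleton] at h; subst h; exact hy
    rw [← Finset.sum_subset hsub, Finset.sum_pair hxy]
    intro t ht hts
    simp only [Finset.mem_insert, Finset.mem_singleton, not_or] at hts
    exact h0 t ht hts.1 hts.2

lemma homflyR_zl {x y : ℤ} (k : ℤ) (h1 : k ≠ x) (h2 : k ≠ y) (w : ℤ) :
    homflyR x y k w = 0 := by
  unfold homflyR
  rw [if_neg (by omega), if_neg (by omega), if_neg (by omega)]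

lemma homflyR_zr {x y : ℤ} (k : ℤ) (h1 : k ≠ x) (h2 : k ≠ y) (w : ℤ) :
    homflyR x y w k = 0 := by
  unfold homflyR
  rw [if_neg (by omega), if_neg (by omega), if_neg (by omega)]

lemma quad (x u v w : ℤ) : x = u ∨ x = v ∨ x = w ∨ (x ≠ u ∧ x ≠ v ∧ x ≠ w) := by
  by_cases h1 : x = u
  · exact Or.inl h1
  by_cases h2 : x = v
  · exact Or.inr (Or.inl h2)
  by_cases h3 : x = w
  · exact Or.inr (Or.inr (Or.inl h3))
  exact Or.inr (Or.inr (Or.inr ⟨h1, h2, h3⟩))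

set_option maxHeartbeats 4000000 in
/-- The Homflypt R-matrix on the index set `I_n` satisfies the Yang–Baxter equation. -/
theorem homflyR_yang_baxter (n : ℕ) (hn : 1 ≤ n) (a b c d e f : ℤ)
    (ha : a ∈ homflyIdx n) (hb : b ∈ homflyIdx n) (hc : c ∈ homflyIdx n)
    (hd : d ∈ homflyIdx n) (he : e ∈ homflyIdx n) (hf : f ∈ homflyIdx n) :
    ∑ i ∈ homflyIdx n, ∑ j ∈ homflyIdx n, ∑ k ∈ homflyIdx n,
        homflyR a b i j * homflyR j c k f * homflyR i k d e =
      ∑ i ∈ homflyIdx n, ∑ j ∈ homflyIdx n, ∑ k ∈ homflyIdx n,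
        homflyR b c i j * homflyR a i d k * homflyR k j e f := by
  set I := homflyIdx n with hI
  have L1 : ∑ i ∈ I, ∑ j ∈ I, ∑ k ∈ I,
      homflyR a b i j * homflyR j c k f * homflyR i k d e
      = ∑ i ∈ I, ∑ j ∈ I, (homflyR a b i j * homflyR j c j f * homflyR i j d e
        + if j = c then 0 else homflyR a b i j * homflyR j c c f * homflyR i c d e) := by
    refine Finset.sum_congr rfl fun i hi => Finset.sum_congr rfl fun j hj => ?_
    exact hsum hj hc _ (fun k hk h1 h2 => by rw [homflyR_zl k h1 h2]; ring)
  have L2 : ∑ i ∈ I, ∑ j ∈ I, (homflyR a b i j * homflyR j c j f * homflyR i j d e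
        + if j = c then 0 else homflyR a b i j * homflyR j c c f * homflyR i c d e)
      = ∑ i ∈ I, ((homflyR a b i b * homflyR b c b f * homflyR i b d e
        + if b = c then 0 else homflyR a b i b * homflyR b c c f * homflyR i c d e)
        + if b = a then 0 else
          (homflyR a b i a * homflyR a c a f * homflyR i a d e
        + if a = c then 0 else homflyR a b i a * homflyR a c c f * homflyR i c d e)) := by
    refine Finset.sum_congr rfl fun i hi => ?_
    exact hsum hb ha _ (fun j hj h1 h2 => by rw [homflyR_zr j h2 h1]; simp)
  have L3 : ∑ i ∈ I, ((homflyR a b i b * homflyR b c b f * homflyR i b d e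
        + if b = c then 0 else homflyR a b i b * homflyR b c c f * homflyR i c d e)
        + if b = a then 0 else
          (homflyR a b i a * homflyR a c a f * homflyR i a d e
        + if a = c then 0 else homflyR a b i a * homflyR a c c f * homflyR i c d e))
      = ((homflyR a b a b * homflyR b c b f * homflyR a b d e
        + if b = c then 0 else homflyR a b a b * homflyR b c c f * homflyR a c d e)
        + if b = a then 0 else
          (homflyR a b a a * homflyR a c a f * homflyR a a d e
        + if a = c then 0 else homflyR a b a a * homflyR a c c f * homflyR a c d e))
        + if a = b then 0 else
        ((homflyR a b b b * homflyR b c b f * homflyR b b d e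
        + if b = c then 0 else homflyR a b b b * homflyR b c c f * homflyR b c d e)
        + if b = a then 0 else
          (homflyR a b b a * homflyR a c a f * homflyR b a d e
        + if a = c then 0 else homflyR a b b a * homflyR a c c f * homflyR b c d e)) := by
    exact hsum ha hb _ (fun i hi h1 h2 => by simp [homflyR_zl i h1 h2])
  have R1 : ∑ i ∈ I, ∑ j ∈ I, ∑ k ∈ I,
      homflyR b c i j * homflyR a i d k * homflyR k j e f
      = ∑ i ∈ I, ∑ j ∈ I, (homflyR b c i j * homflyR a i d i * homflyR i j e f
        + if i = a then 0 else homflyR b c i j * homflyR a i d a * homflyR a j e f) := by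
    refine Finset.sum_congr rfl fun i hi => Finset.sum_congr rfl fun j hj => ?_
    exact hsum hi ha _ (fun k hk h1 h2 => by rw [homflyR_zr k h2 h1]; ring)
  have R2 : ∑ i ∈ I, ∑ j ∈ I, (homflyR b c i j * homflyR a i d i * homflyR i j e f
        + if i = a then 0 else homflyR b c i j * homflyR a i d a * homflyR a j e f)
      = ∑ i ∈ I, ((homflyR b c i c * homflyR a i d i * homflyR i c e f
        + if i = a then 0 else homflyR b c i c * homflyR a i d a * homflyR a c e f)
        + if c = b then 0 else
          (homflyR b c i b * homflyR a i d i * homflyR i b e f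
        + if i = a then 0 else homflyR b c i b * homflyR a i d a * homflyR a b e f)) := by
    refine Finset.sum_congr rfl fun i hi => ?_
    exact hsum hc hb _ (fun j hj h1 h2 => by rw [homflyR_zr j h2 h1]; simp)
  have R3 : ∑ i ∈ I, ((homflyR b c i c * homflyR a i d i * homflyR i c e f
        + if i = a then 0 else homflyR b c i c * homflyR a i d a * homflyR a c e f)
        + if c = b then 0 else
          (homflyR b c i b * homflyR a i d i * homflyR i b e f
        + if i = a then 0 else homflyR b c i b * homflyR a i d a * homflyR a b e f))
      = ((homflyR b c b c * homflyR a b d b * homflyR b c e f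
        + if b = a then 0 else homflyR b c b c * homflyR a b d a * homflyR a c e f)
        + if c = b then 0 else
          (homflyR b c b b * homflyR a b d b * homflyR b b e f
        + if b = a then 0 else homflyR b c b b * homflyR a b d a * homflyR a b e f))
        + if b = c then 0 else
        ((homflyR b c c c * homflyR a c d c * homflyR c c e f
        + if c = a then 0 else homflyR b c c c * homflyR a c d a * homflyR a c e f)
        + if c = b then 0 else
          (homflyR b c c b * homflyR a c d c * homflyR c b e f
        + if c = a then 0 else homflyR b c c b * homflyR a c d a * homflyR a b e f)) := by
    exact hsum hb hc _ (fun i hi h1 h2 => by simp [homflyR_zl i h1 h2])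
  rw [L1, L2, L3, R1, R2, R3]
  have hqr : T 1 * T (-1) = (1 : LaurentPolynomial ℤ) := by
    rw [← T_add]; norm_num
  simp only [homflyR]
  generalize hgq : (T 1 : LaurentPolynomial ℤ) = q at hqr ⊢
  generalize hgr : (T (-1) : LaurentPolynomial ℤ) = r at hqr ⊢
  clear hgq hgr hd he hf hI hn ha hb hc
  rcases lt_trichotomy a b with hab | hab | hab <;>
  rcases lt_trichotomy b c with hbc | hbc | hbc <;>
  rcases lt_trichotomy a c with hac | hac | hac <;>
  first
  | (exfalso; omega)
  | ((try have s1 : a ≠ b := by omega);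
      (try have s2 : a < b := by omega);
      (try have s3 : ¬ a < b := by omega);
      (try have s4 : a ≠ c := by omega);
      (try have s5 : a < c := by omega);
      (try have s6 : ¬ a < c := by omega);
      (try have s7 : b ≠ a := by omega);
      (try have s8 : b < a := by omega);
      (try have s9 : ¬ b < a := by omega);
      (try have s10 : b ≠ c := by omega);
      (try have s11 : b < c := by omega);
      (try have s12 : ¬ b < c := by omega);
      (try have s13 : c ≠ a := by omega);
      (try have s14 : c < a := by omega);
      (try have s15 : ¬ c < a := by omega);
      (try have s16 : c ≠ b := by omega);
      (try have s17 : c < b := by omega);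
      (try have s18 : ¬ c < b := by omega);
            (try simp only [*, eq_self_iff_true, lt_self_iff_false, ne_eq,
                not_false_eq_true, not_true, true_and, and_true, false_and, and_false,
                if_true, if_false, ite_true, ite_false, ite_self,
                mul_zero, zero_mul, mul_one, one_mul, add_zero, zero_add]) <;>
      (rcases quad d a b c with hd | hd | hd | hd <;>
      (try subst d) <;>
      (try obtain ⟨hd1, hd2, hd3⟩ := hd) <;>
      (try have hd1' := hd1.symm) <;>
      (try have hd2' := hd2.symm) <;>
      (try have hd3' := hd3.symm) <;>
      (try simp only [*, eq_self_iff_true, lt_self_iff_false, ne_eq,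
                not_false_eq_true, not_true, true_and, and_true, false_and, and_false,
                if_true, if_false, ite_true, ite_false, ite_self,
                mul_zero, zero_mul, mul_one, one_mul, add_zero, zero_add]) <;>
      (rcases quad e a b c with he | he | he | he <;>
      (try subst e) <;>
      (try obtain ⟨he1, he2, he3⟩ := he) <;>
      (try have he1' := he1.symm) <;>
      (try have he2' := he2.symm) <;>
      (try have he3' := he3.symm) <;>
      (try simp only [*, eq_self_iff_true, lt_self_iff_false, ne_eq,
                not_false_eq_true, not_true, true_and, and_true, false_and, and_false,
                if_true, if_false, ite_true, ite_false, ite_self,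
                mul_zero, zero_mul, mul_one, one_mul, add_zero, zero_add]) <;>
      (rcases quad f a b c with hf | hf | hf | hf <;>
      (try subst f) <;>
      (try obtain ⟨hf1, hf2, hf3⟩ := hf) <;>
      (try have hf1' := hf1.symm) <;>
      (try have hf2' := hf2.symm) <;>
      (try have hf3' := hf3.symm) <;>
      (try simp only [*, eq_self_iff_true, lt_self_iff_false, ne_eq,
                not_false_eq_true, not_true, true_and, and_true, false_and, and_false,
                if_true, if_false, ite_true, ite_false, ite_self,
                mul_zero, zero_mul, mul_one, one_mul, add_zero, zero_add]) <;>
      (first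
        | ring1
        | linear_combination (1) * hqr
        | linear_combination (-1) * hqr
        | linear_combination (2) * hqr
        | linear_combination (-2) * hqr
        | linear_combination (q) * hqr
        | linear_combination (-q) * hqr
        | linear_combination (r) * hqr
        | linear_combination (-r) * hqr
        | linear_combination (q - r) * hqr
        | linear_combination (r - q) * hqr
        | linear_combination (q + r) * hqr
        | linear_combination (-q - r) * hqr
        | linear_combination (2*q - 2*r) * hqr
        | linear_combination (2*r - 2*q) * hqr
        | linear_combination (q*q) * hqr
        | linear_combination (-(q*q)) * hqr
        | linear_combination (r*r) * hqr
        | linear_combination (-(r*r)) * hqr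
        | linear_combination (q*q - 1) * hqr
        | linear_combination (1 - q*q) * hqr
        | linear_combination ((q - r)*(q - r)) * hqr
        | linear_combination (-((q - r)*(q - r))) * hqr)))))

end
end

section
/- Fix a natural number n ≥ 1 and let R and R̄ be the Homflypt R-matrices on the index set I_n over ℤ[q, q⁻¹]. Then R̄ is a two-sided inverse of R: for all a, b, c, d ∈ I_n, Σ_{i,j ∈ I_n} R^{ab}_{ij} R̄^{ij}_{cd} = δ^a_c δ^b_d, where δ is the Kronecker delta. -/
set_option maxHeartbeats 1000000


noncomputable section

open LaurentPolynomial

/-- `R̄` is a two-sided inverse of the Homflypt R-matrix on `I_n`: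
`Σ_{i,j ∈ I_n} R^{ab}_{ij} R̄^{ij}_{cd} = δ^a_c δ^b_d`. -/
theorem homflyR_mul_homflyRbar (n : ℕ) (hn : 1 ≤ n) (a b c d : ℤ)
    (ha : a ∈ homflyIdx n) (hb : b ∈ homflyIdx n) (hc : c ∈ homflyIdx n)
    (hd : d ∈ homflyIdx n) :
    ∑ i ∈ homflyIdx n, ∑ j ∈ homflyIdx n, homflyR a b i j * homflyRbar i j c d =
      (if a = c then 1 else 0) * (if b = d then (1 : LaurentPolynomial ℤ) else 0) := by
  classical
  have hT : T 1 * T (-1) = (1 : LaurentPolynomial ℤ) := by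
    rw [← T_add]; norm_num
  have hsub : ({(a, b), (b, a)} : Finset (ℤ × ℤ)) ⊆ homflyIdx n ×ˢ homflyIdx n := by
    intro p hp
    simp only [Finset.mem_insert, Finset.mem_singleton] at hp
    rcases hp with rfl | rfl <;> simp [Finset.mem_product, ha, hb]
  have key : ∀ p ∈ homflyIdx n ×ˢ homflyIdx n,
      p ∉ ({(a, b), (b, a)} : Finset (ℤ × ℤ)) →
      homflyR a b p.1 p.2 * homflyRbar p.1 p.2 c d = 0 := by
    rintro ⟨i, j⟩ _ hp
    simp only [Finset.mem_insert, Finset.mem_singleton, Prod.mk.injEq, not_or, not_and] at hp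
    have h0 : homflyR a b i j = 0 := by
      unfold homflyR
      split_ifs with h1 h2 h3 <;> [exfalso; exfalso; exfalso; rfl] <;> omega
    rw [h0, zero_mul]
  rw [← Finset.sum_product', ← Finset.sum_subset hsub key]
  by_cases hab : a = b
  · subst hab
    simp only [Finset.insert_eq_self.mpr (Finset.mem_singleton_self _), Finset.sum_singleton]
    clear key hsub ha hb hc hd hn
    simp only [homflyR, homflyRbar]
    split_ifs <;> first | (exfalso; omega) | exact hT | ring1 | (simp_all only [hT, true_and, and_true, ne_eq, not_true_eq_false, not_and, not_not, lt_self_iff_false, gt_iff_lt, one_mul, mul_one, zero_mul, mul_zero]; try ring1; try omega)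
  · have hne : ((a, b) : ℤ × ℤ) ∉ ({(b, a)} : Finset (ℤ × ℤ)) := by
      simp [Prod.ext_iff]; omega
    rw [Finset.sum_insert hne, Finset.sum_singleton]
    clear key hsub ha hb hc hd hn
    have h1 : homflyR a b a b = if a < b then T 1 - T (-1) else 0 := by
      unfold homflyR; split_ifs <;> first | (exfalso; omega) | ring1 | rfl
    have h2 : homflyR a b b a = 1 := by
      unfold homflyR; split_ifs <;> first | (exfalso; omega) | ring1 | rfl
    rw [h1, h2, one_mul]
    by_cases hlt : a < b
    · rw [if_pos hlt]
      unfold homflyRbar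
      split_ifs <;> first | (exfalso; omega) | ring1
    · rw [if_neg hlt, zero_mul, zero_add]
      unfold homflyRbar
      split_ifs <;> first | (exfalso; omega) | ring1

end
end

section
/- Fix a natural number n ≥ 1 and let R and R̄ be the Homflypt R-matrices on the index set I_n over ℤ[q, q⁻¹], and take λ = q, so that the cup/cap matrix is M_{ab} = q^{a/2}·δ_{ab}. Then the R–λ equation (invariance under the antiparallel second Reidemeister move) holds: for all a, b, c, d ∈ I_n, Σ_{s,t ∈ I_n} q^{(s−b)/2} · q^{(t−c)/2} · R^{bt}_{as} · R̄^{cs}_{dt} = δ^a_c δ^b_d. (Note that all elements of I_n have the same parity, so the exponents (s−b)/2 and (t−c)/2 are integers and each term lies in ℤ[q, q⁻¹].) -/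
noncomputable section

open LaurentPolynomial

lemma mem_homflyIdx' {n : ℕ} {a : ℤ} :
    a ∈ homflyIdx n ↔ -(n : ℤ) ≤ a ∧ a ≤ (n : ℤ) ∧ (a + (n : ℤ)) % 2 = 0 := by
  simp [homflyIdx, Finset.mem_filter, Finset.mem_Icc, and_assoc]

lemma T_one_sub_mul (e : ℤ) :
    (T 1 - T (-1) : LaurentPolynomial ℤ) * T e = T (e + 1) - T (e - 1) := by
  rw [sub_mul, ← T_add, ← T_add, show (1 : ℤ) + e = e + 1 by ring,
    show (-1 : ℤ) + e = e - 1 by ring]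

lemma homfly_telescope (n : ℕ) (a c : ℤ) (ha : a ∈ homflyIdx n) (hc : c ∈ homflyIdx n)
    (hac : a < c) :
    ∑ s ∈ (homflyIdx n).filter (fun s => a < s ∧ s < c),
        ((T 1 - T (-1)) * T ((s - a) / 2 + (s - c) / 2) : LaurentPolynomial ℤ)
      = T ((c - a) / 2 - 1) - T (1 - (c - a) / 2) := by
  obtain ⟨ha1, ha2, ha3⟩ := mem_homflyIdx'.mp ha
  obtain ⟨hc1, hc2, hc3⟩ := mem_homflyIdx'.mp hc
  obtain ⟨K, hK⟩ : ∃ K : ℤ, c - a = 2 * K := ⟨(c - a) / 2, by omega⟩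
  have hK1 : 1 ≤ K := by omega
  obtain ⟨N, hcast⟩ : ∃ N : ℕ, (N : ℤ) = K - 1 := ⟨(K - 1).toNat, by omega⟩
  rw [show (c - a) / 2 = K by omega]
  rw [Finset.sum_nbij' (i := fun s => ((s - a) / 2 - 1).toNat)
      (j := fun i : ℕ => a + 2 * (i : ℤ) + 2) (t := Finset.range N)
      (g := fun i : ℕ => (T (2 * (i : ℤ) + 1 - K + 2) - T (2 * (i : ℤ) + 1 - K)
        : LaurentPolynomial ℤ))]
  · have := Finset.sum_range_sub (f := fun i : ℕ => (T (2 * (i : ℤ) + 1 - K)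
        : LaurentPolynomial ℤ)) N
    rw [show (T (K - 1) - T (1 - K) : LaurentPolynomial ℤ)
        = T (2 * (N : ℤ) + 1 - K) - T (2 * ((0 : ℕ) : ℤ) + 1 - K) by
      rw [show 2 * (N : ℤ) + 1 - K = K - 1 by omega,
        show 2 * ((0 : ℕ) : ℤ) + 1 - K = 1 - K by omega]]
    rw [← this]
    apply Finset.sum_congr rfl
    intro i _
    congr 2
    push_cast
    ring
  · intro s hs
    simp only [Finset.mem_filter, mem_homflyIdx'] at hs
    simp only [Finset.mem_range]
    omega
  · intro i hi
    simp only [Finset.mem_range] at hi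
    simp only [Finset.mem_filter, mem_homflyIdx']
    omega
  · intro s hs
    simp only [Finset.mem_filter, mem_homflyIdx'] at hs
    omega
  · intro i hi
    simp only [Finset.mem_range] at hi
    omega
  · intro s hs
    simp only [Finset.mem_filter, mem_homflyIdx'] at hs
    have h3 : 2 * ((((s - a) / 2 - 1).toNat : ℤ)) + 1 - K
        = (s - a) / 2 + (s - c) / 2 - 1 := by omega
    rw [T_one_sub_mul, h3,
      show (s - a) / 2 + (s - c) / 2 - 1 + 2 = (s - a) / 2 + (s - c) / 2 + 1 by ring]

/-- The `R`–`λ` equation (invariance under the antiparallel second Reidemeister move)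
for the Homflypt R-matrices with `λ = q`, i.e. cup/cap matrix `M_{ab} = q^{a/2} δ_{ab}`:
`Σ_{s,t ∈ I_n} q^{(s-b)/2} q^{(t-c)/2} R^{bt}_{as} R̄^{cs}_{dt} = δ^a_c δ^b_d`.
(All elements of `I_n` have the same parity, so the exponents are the integers
`(s - b)/2` and `(t - c)/2`.) -/
theorem homflyR_R_lambda (n : ℕ) (hn : 1 ≤ n) (a b c d : ℤ)
    (ha : a ∈ homflyIdx n) (hb : b ∈ homflyIdx n) (hc : c ∈ homflyIdx n)
    (hd : d ∈ homflyIdx n) :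
    ∑ s ∈ homflyIdx n, ∑ t ∈ homflyIdx n,
        T ((s - b) / 2) * T ((t - c) / 2) * homflyR b t a s * homflyRbar c s d t =
      (if a = c then 1 else 0) * (if b = d then (1 : LaurentPolynomial ℤ) else 0) := by
  by_cases hab : a = b
  · -- diagonal case: a = b
    subst hab
    -- inner sum reduces to t = s
    have hdiag : ∀ s ∈ homflyIdx n,
        (∑ t ∈ homflyIdx n,
          T ((s - a) / 2) * T ((t - c) / 2) * homflyR a t a s * homflyRbar c s d t)
        = T ((s - a) / 2) * T ((s - c) / 2) * homflyR a s a s * homflyRbar c s d s := by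
      intro s hs
      refine Finset.sum_eq_single_of_mem s hs ?_
      intro t _ hts
      have hR : homflyR a t a s = 0 := by
        simp only [homflyR, true_and, and_true, ne_eq]
        split_ifs <;> first | rfl | (exfalso; omega)
      rw [hR, mul_zero, zero_mul]
    rw [Finset.sum_congr rfl hdiag]
    by_cases hcd : c = d
    · subst hcd
      rcases lt_trichotomy a c with hlt | heq | hgt
      · -- a < c : telescoping
        obtain ⟨ha1, ha2, ha3⟩ := mem_homflyIdx'.mp ha
        obtain ⟨hc1, hc2, hc3⟩ := mem_homflyIdx'.mp hc
        have hsplit : ∀ s ∈ homflyIdx n,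
            T ((s - a) / 2) * T ((s - c) / 2) * homflyR a s a s * homflyRbar c s c s
            = (if s = a then T ((a - c) / 2) * T 1 * (T (-1) - T 1) else 0)
              + (if s = c then T ((c - a) / 2) * (T 1 - T (-1)) * T (-1) else 0)
              + (if a < s ∧ s < c then
                  ((T 1 - T (-1)) * T ((s - a) / 2 + (s - c) / 2)) * (T (-1) - T 1)
                else 0) := by
          intro s hs
          obtain ⟨hs1, hs2, hs3⟩ := mem_homflyIdx'.mp hs
          simp only [homflyR, homflyRbar, true_and, and_true, ne_eq]
          split_ifs <;> first
            | (exfalso; omega)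
            | ring1
            | (rw [show (s - a) / 2 = 0 by omega, show (s - c) / 2 = (a - c) / 2 by omega,
                T_zero]; ring1)
            | (rw [show (s - c) / 2 = 0 by omega, show (s - a) / 2 = (c - a) / 2 by omega,
                T_zero]; ring1)
            | (rw [show (T ((s - a) / 2) * T ((s - c) / 2) : LaurentPolynomial ℤ)
                = T ((s - a) / 2 + (s - c) / 2) from (T_add _ _).symm]; ring1)
        rw [Finset.sum_congr rfl hsplit]
        rw [Finset.sum_add_distrib, Finset.sum_add_distrib,
          Finset.sum_ite_eq' (homflyIdx n) a, Finset.sum_ite_eq' (homflyIdx n) c,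
          if_pos ha, if_pos hc, ← Finset.sum_filter, ← Finset.sum_mul,
          homfly_telescope n a c ha hc hlt]
        have hac : a ≠ c := ne_of_lt hlt
        rw [if_neg hac, zero_mul]
        set K : ℤ := (c - a) / 2 with hKdef
        rw [show (a - c) / 2 = -K by omega]
        rw [show (K - 1 : ℤ) = K + (-1) by ring, show (1 - K : ℤ) = -K + 1 by ring,
          T_add, T_add]
        have huv : (T 1 * T (-1) : LaurentPolynomial ℤ) = 1 := by
          rw [← T_add]; norm_num
        ring
      · -- a = c
        subst heq
        simp only [if_pos rfl, one_mul]
        refine Finset.sum_eq_single_of_mem a ha ?_ |>.trans ?_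
        · intro s _ hsa
          simp only [homflyR, homflyRbar, true_and, and_true, ne_eq]
          split_ifs <;> first | (exfalso; omega) | ring1
        · have h0 : (a - a) / 2 = 0 := by omega
          have hT : (T 1 * T (-1) : LaurentPolynomial ℤ) = 1 := by
            rw [← T_add]; norm_num
          simp [homflyR, homflyRbar, h0, hT]
      · -- a > c : everything vanishes
        have hac : a ≠ c := ne_of_gt hgt
        rw [if_neg hac, zero_mul]
        refine Finset.sum_eq_zero ?_
        intro s _
        simp only [homflyR, homflyRbar, true_and, and_true, ne_eq]
        split_ifs <;> first | (exfalso; omega) | ring1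
    · -- c ≠ d : everything vanishes
      have hrhs : ((if a = c then 1 else 0) * (if a = d then (1 : LaurentPolynomial ℤ)
          else 0)) = 0 := by
        split_ifs <;> first | (exfalso; omega) | ring1
      rw [hrhs]
      refine Finset.sum_eq_zero ?_
      intro s _
      have hR : homflyRbar c s d s = 0 := by
        simp only [homflyRbar, true_and, and_true, ne_eq]
        split_ifs <;> first | rfl | (exfalso; omega)
      rw [hR, mul_zero]
  · -- off-diagonal case: a ≠ b
    have h1 : ∀ s ∈ homflyIdx n, s ≠ b →
        (∑ t ∈ homflyIdx n,
          T ((s - b) / 2) * T ((t - c) / 2) * homflyR b t a s * homflyRbar c s d t) = 0 := by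
      intro s _ hsb
      refine Finset.sum_eq_zero ?_
      intro t _
      have hR : homflyR b t a s = 0 := by
        simp only [homflyR, true_and, and_true, ne_eq]
        split_ifs <;> first | rfl | (exfalso; omega)
      rw [hR, mul_zero, zero_mul]
    rw [Finset.sum_eq_single_of_mem b hb h1]
    rw [Finset.sum_eq_single_of_mem a ha (fun t _ hta => by
      have hR : homflyR b t a b = 0 := by
        simp only [homflyR, true_and, and_true, ne_eq]
        split_ifs <;> first | rfl | (exfalso; omega)
      rw [hR, mul_zero, zero_mul])]
    have hRval : homflyR b a a b = 1 := by
      simp only [homflyR, true_and, and_true, ne_eq]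
      split_ifs <;> first | rfl | (exfalso; omega)
    rw [hRval, mul_one]
    have hbb : (b - b) / 2 = 0 := by omega
    rw [hbb, T_zero, one_mul]
    by_cases hac : a = c
    · subst hac
      have h0 : (a - a) / 2 = 0 := by omega
      rw [h0, T_zero, one_mul, if_pos rfl, one_mul]
      simp only [homflyRbar, true_and, and_true, ne_eq]
      split_ifs <;> first | rfl | (exfalso; omega)
    · have hR : homflyRbar c b d a = 0 := by
        simp only [homflyRbar, true_and, and_true, ne_eq]
        split_ifs <;> first | rfl | (exfalso; omega)
      rw [hR, mul_zero, if_neg hac, zero_mul]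


end
end
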